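/- Let B_0,…,B_{m−1} be orthonormal bases of ℂ^d, with B_a = {e^a_0,…,e^a_{d−1}}, let v_0,…,v_{m−1} be positive reals with ∑_a v_a = 1, and write π^a_j = e^a_j (e^a_j)† for the rank-one projector matrices. Suppose the linear map 𝓕 on d×d complex matrices defined by 𝓕(M) = ∑_{a,j} v_a tr(π^a_j M) π^a_j is invertible (informational completeness), and set R^a_j = 𝓕⁻¹(π^a_j) (the canonical dual). Let Q^a_j be any d×d complex matrices satisfying the dual frame condition ∑_{a,j} v_a tr(π^a_j M) Q^a_j = M for every d×d matrix M. Then ∑_a v_a ( ∑_j ‖Q^a_j‖² − (1/d)‖∑_j Q^a_j‖² ) ≥ ∑_a v_a ( ∑_j ‖R^a_j‖² − (1/d)‖∑_j R^a_j‖² ), where ‖·‖ is the Frobenius norm, with equality if and only if there exist matrices D_0,…,D_{m−1} with ∑_a v_a D_a = 0 such that Q^a_j = R^a_j + D_a for all a and j. -/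

import Mathlib

open Matrix

/-- The rank-one projection matrix `x x†` associated to a unit vector `x ∈ ℂ^d`. -/
noncomputable def rankOneProj {d : ℕ} (x : EuclideanSpace ℂ (Fin d)) :
    Matrix (Fin d) (Fin d) ℂ :=
  Matrix.of fun r s => x r * (starRingEnd ℂ) (x s)

/-- The squared Frobenius (Hilbert–Schmidt) norm `‖A‖² = tr(A†A)` of a complex matrix. -/
noncomputable def frobSq {d : ℕ} (A : Matrix (Fin d) (Fin d) ℂ) : ℝ :=
  ((Aᴴ * A).trace).re

/-!
Vectorization identifies `d × d` matrices carrying the Hilbert–Schmidt inner product with a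
Euclidean space, so the argument takes place in a finite-dimensional inner product space.
There `∑_j ‖X_j‖² − (1/d)‖∑_j X_j‖²` is the scatter `∑_j ‖X_j − X̄‖²` of the family about its
mean. Writing `Q = R + D`, the scatter of `R_a + D_a` is that of `R_a`, plus that of `D_a`, plus
a cross term whose weighted sum over `a` vanishes. Its first part, `∑ v_a ⟪R^a_j, D^a_j⟫`, is the
trace of `M ↦ ∑ v_a ⟪R^a_j, M⟫ D^a_j`; as `𝓕` is self-adjoint, `⟪R^a_j, 𝓕 N⟫ = ⟪π^a_j, N⟫`, so
this operator vanishes because `Q` and `R` are both dual frames. Its second part vanishes because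
`∑_j R^a_j = 1` for every `a` (since `𝓕 1 = 1`), while `∑_a v_a ∑_j D^a_j = 0` (the dual frame
condition at `M = 1`). Equality therefore forces each `D^a_j` to be independent of `j`.
-/

open Finset InnerProductSpace RCLike
open scoped InnerProductSpace

section Scatter

variable {E κ : Type*} [NormedAddCommGroup E] [Fintype κ]

noncomputable def scatter (X : κ → E) : ℝ :=
  ∑ j, ‖X j‖ ^ 2 - (Fintype.card κ : ℝ)⁻¹ * ‖∑ j, X j‖ ^ 2

theorem scatter_eq_sum_norm_sub_mean_sq (𝕜 : Type*) [RCLike 𝕜] [InnerProductSpace 𝕜 E]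
    (X : κ → E) : scatter X = ∑ j, ‖X j - (Fintype.card κ : 𝕜)⁻¹ • ∑ k, X k‖ ^ 2 := by
  rcases isEmpty_or_nonempty κ with hκ | hκ
  · simp [scatter]
  set n : ℝ := (Fintype.card κ : ℝ)
  set S := ∑ k, X k
  have hn : n ≠ 0 := by positivity
  have hc : (Fintype.card κ : 𝕜)⁻¹ = ((n⁻¹ : ℝ) : 𝕜) := by simp [n]
  have hcross : ∑ j, re ⟪X j, ((n⁻¹ : ℝ) : 𝕜) • S⟫_𝕜 = n⁻¹ * ‖S‖ ^ 2 := by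
    rw [← map_sum, ← sum_inner, inner_smul_right, re_ofReal_mul, inner_self_eq_norm_sq]
  simp only [hc, @norm_sub_sq 𝕜, sum_add_distrib, sum_sub_distrib, ← mul_sum, hcross, norm_smul,
    norm_ofReal, sum_const, card_univ, nsmul_eq_mul, scatter]
  rw [abs_of_nonneg (by positivity)]
  field_simp
  ring

theorem scatter_nonneg (𝕜 : Type*) [RCLike 𝕜] [InnerProductSpace 𝕜 E] (X : κ → E) :
    0 ≤ scatter X := by
  rw [scatter_eq_sum_norm_sub_mean_sq 𝕜]
  positivity

theorem scatter_eq_zero_iff (𝕜 : Type*) [RCLike 𝕜] [InnerProductSpace 𝕜 E] [Nonempty κ]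
    (X : κ → E) : scatter X = 0 ↔ ∃ c, ∀ j, X j = c := by
  rw [scatter_eq_sum_norm_sub_mean_sq 𝕜, sum_eq_zero_iff_of_nonneg fun _ _ => by positivity]
  constructor
  · intro h
    exact ⟨_, fun j => sub_eq_zero.mp (by simpa using h j (mem_univ j))⟩
  · rintro ⟨c, hc⟩ j -
    simp [hc, ← Nat.cast_smul_eq_nsmul 𝕜, smul_smul]

theorem scatter_add {𝕜 : Type*} [RCLike 𝕜] [InnerProductSpace 𝕜 E] (X Y : κ → E) :
    scatter (X + Y) = scatter X + scatter Y +
      2 * re (∑ j, ⟪X j, Y j⟫_𝕜 - (Fintype.card κ : 𝕜)⁻¹ * ⟪∑ j, X j, ∑ j, Y j⟫_𝕜) := by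
  have hc : (Fintype.card κ : 𝕜)⁻¹ = (((Fintype.card κ : ℝ)⁻¹ : ℝ) : 𝕜) := by simp
  simp only [scatter, Pi.add_apply, sum_add_distrib, @norm_add_sq 𝕜, map_sub, map_sum, hc,
    re_ofReal_mul, ← mul_sum]
  ring

end Scatter

/-- The trace of `x ↦ ∑ i, ⟪X i, x⟫ • Y i` is `∑ i, ⟪X i, Y i⟫`. -/
theorem sum_inner_eq_zero_of_sum_inner_smul_eq_zero {𝕜 E ι : Type*} [RCLike 𝕜]
    [NormedAddCommGroup E] [InnerProductSpace 𝕜 E] [FiniteDimensional 𝕜 E] [Fintype ι]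
    (X Y : ι → E) (h : ∀ x, ∑ i, ⟪X i, x⟫_𝕜 • Y i = 0) : ∑ i, ⟪X i, Y i⟫_𝕜 = 0 := by
  let b := stdOrthonormalBasis 𝕜 E
  calc ∑ i, ⟪X i, Y i⟫_𝕜 = ∑ i, ∑ k, ⟪X i, b k⟫_𝕜 * ⟪b k, Y i⟫_𝕜 := by
        simp only [b.sum_inner_mul_inner]
    _ = ∑ k, ⟪b k, ∑ i, ⟪X i, b k⟫_𝕜 • Y i⟫_𝕜 := by
        rw [Finset.sum_comm]; simp only [inner_sum, inner_smul_right]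
    _ = 0 := by simp [h]

section CanonicalDual

variable {𝕜 E ι κ : Type*} [RCLike 𝕜] [NormedAddCommGroup E] [InnerProductSpace 𝕜 E]
  [Fintype ι] [Fintype κ]

variable (𝕜) in
noncomputable def frameOp (v : ι → ℝ) (π : ι → κ → E) : E →ₗ[𝕜] E :=
  ∑ a, ∑ j, (v a : 𝕜) • (rankOne 𝕜 (π a j) (π a j) : E →ₗ[𝕜] E)

variable (𝕜) in
def IsDualFrame (v : ι → ℝ) (π Q : ι → κ → E) : Prop :=
  ∀ x, ∑ a, ∑ j, ((v a : 𝕜) * ⟪π a j, x⟫_𝕜) • Q a j = x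

variable {v : ι → ℝ} {π : ι → κ → E}

theorem frameOp_apply (x : E) :
    frameOp 𝕜 v π x = ∑ a, ∑ j, ((v a : 𝕜) * ⟪π a j, x⟫_𝕜) • π a j := by
  simp [frameOp, smul_smul]

theorem isSymmetric_frameOp : (frameOp 𝕜 v π).IsSymmetric :=
  LinearMap.isSymmetric_sum _ fun _ _ => LinearMap.isSymmetric_sum _ fun _ _ =>
    (isSymmetric_rankOne_self _).smul (conj_ofReal _)

theorem frameOp_eq_self (hv : ∑ a, v a = 1) {u : E} (hπu : ∀ a j, ⟪π a j, u⟫_𝕜 = 1)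
    (hπ : ∀ a, ∑ j, π a j = u) : frameOp 𝕜 v π u = u := by
  simp only [frameOp_apply, hπu, mul_one, ← smul_sum, hπ, ← sum_smul, ← ofReal_sum, hv,
    ofReal_one, one_smul]

theorem IsDualFrame.sum_inner_smul_sub_eq_zero {R Q : ι → κ → E} (hQ : IsDualFrame 𝕜 v π Q)
    (hR : IsDualFrame 𝕜 v π R) (x : E) :
    ∑ a, ∑ j, ((v a : 𝕜) * ⟪π a j, x⟫_𝕜) • (Q a j - R a j) = 0 := by
  simp only [smul_sub, sum_sub_distrib, hQ x, hR x, sub_self]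

variable {R : ι → κ → E} (hR : ∀ a j, frameOp 𝕜 v π (R a j) = π a j)
include hR

theorem isDualFrame_of_frameOp_eq (hinj : Function.Injective (frameOp 𝕜 v π)) :
    IsDualFrame 𝕜 v π R := fun x => hinj <| by
  simp only [map_sum, map_smul, hR, frameOp_apply]

theorem sum_eq_of_frameOp_eq (hinj : Function.Injective (frameOp 𝕜 v π)) (hv : ∑ a, v a = 1)
    {u : E} (hπu : ∀ a j, ⟪π a j, u⟫_𝕜 = 1) (hπ : ∀ a, ∑ j, π a j = u) (a : ι) :
    ∑ j, R a j = u :=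
  hinj <| by rw [map_sum, frameOp_eq_self hv hπu hπ]; simp only [hR, hπ]

theorem sum_mul_inner_eq_zero_of_frameOp_eq [FiniteDimensional 𝕜 E]
    (hsurj : Function.Surjective (frameOp 𝕜 v π)) {D : ι → κ → E}
    (hD : ∀ x, ∑ a, ∑ j, ((v a : 𝕜) * ⟪π a j, x⟫_𝕜) • D a j = 0) :
    ∑ a, ∑ j, (v a : 𝕜) * ⟪R a j, D a j⟫_𝕜 = 0 := by
  have key : ∀ x, ∑ p : ι × κ, ⟪R p.1 p.2, x⟫_𝕜 • ((v p.1 : 𝕜) • D p.1 p.2) = 0 := by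
    intro x
    obtain ⟨y, rfl⟩ := hsurj x
    simpa [Fintype.sum_prod_type, ← isSymmetric_frameOp (R _ _) y, hR, smul_smul, mul_comm]
      using hD y
  simpa [Fintype.sum_prod_type, inner_smul_right] using
    sum_inner_eq_zero_of_sum_inner_smul_eq_zero _ _ key

end CanonicalDual

section Optimality

variable {𝕜 E ι κ : Type*} [RCLike 𝕜] [NormedAddCommGroup E] [InnerProductSpace 𝕜 E]
  [Fintype ι] [Fintype κ] {v : ι → ℝ} {π R D : ι → κ → E} {u : E}
  (hπu : ∀ a j, ⟪π a j, u⟫_𝕜 = 1) (hD : ∀ x, ∑ a, ∑ j, ((v a : 𝕜) * ⟪π a j, x⟫_𝕜) • D a j = 0)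
include hπu hD

theorem sum_smul_sum_eq_zero_of_sum_inner_smul_eq_zero : ∑ a, (v a : 𝕜) • ∑ j, D a j = 0 := by
  simpa only [hπu, mul_one, smul_sum] using hD u

theorem sum_mul_scatter_add_eq_of_frameOp_eq [FiniteDimensional 𝕜 E]
    (hbij : Function.Bijective (frameOp 𝕜 v π)) (hR : ∀ a j, frameOp 𝕜 v π (R a j) = π a j)
    (hv : ∑ a, v a = 1) (hπ : ∀ a, ∑ j, π a j = u) :
    ∑ a, v a * scatter (R a + D a) = ∑ a, v a * scatter (R a) + ∑ a, v a * scatter (D a) := by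
  set c : ι → 𝕜 := fun a => ∑ j, ⟪R a j, D a j⟫_𝕜 -
    (Fintype.card κ : 𝕜)⁻¹ * ⟪∑ j, R a j, ∑ j, D a j⟫_𝕜
  have hcross : ∑ a, (v a : 𝕜) * c a = 0 := by
    have hmean : ∑ a, (v a : 𝕜) * ⟪∑ j, R a j, ∑ j, D a j⟫_𝕜 = 0 := by
      simp only [sum_eq_of_frameOp_eq hR hbij.1 hv hπu hπ, ← inner_smul_right, ← inner_sum,
        sum_smul_sum_eq_zero_of_sum_inner_smul_eq_zero hπu hD, inner_zero_right]
    have hcorr : ∑ a, (v a : 𝕜) * ∑ j, ⟪R a j, D a j⟫_𝕜 = 0 := by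
      simp only [mul_sum]
      exact sum_mul_inner_eq_zero_of_frameOp_eq hR hbij.2 hD
    simp only [c, mul_sub, sum_sub_distrib, hcorr, mul_left_comm _ (Fintype.card κ : 𝕜)⁻¹,
      ← mul_sum, hmean, mul_zero, sub_zero]
  calc ∑ a, v a * scatter (R a + D a)
      = ∑ a, v a * scatter (R a) + ∑ a, v a * scatter (D a)
          + 2 * re (∑ a, (v a : 𝕜) * c a) := by
        simp only [scatter_add (𝕜 := 𝕜), map_sum, re_ofReal_mul, mul_sum, ← sum_add_distrib]
        exact sum_congr rfl fun a _ => by ring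
    _ = _ := by rw [hcross, map_zero, mul_zero, add_zero]

end Optimality

theorem IsDualFrame.canonicalDual_optimal {𝕜 E ι κ : Type*} [RCLike 𝕜] [NormedAddCommGroup E]
    [InnerProductSpace 𝕜 E] [FiniteDimensional 𝕜 E] [Fintype ι] [Fintype κ] [Nonempty κ]
    {v : ι → ℝ} {π R Q : ι → κ → E} (hQ : IsDualFrame 𝕜 v π Q)
    (hbij : Function.Bijective (frameOp 𝕜 v π)) (hR : ∀ a j, frameOp 𝕜 v π (R a j) = π a j)
    (hvpos : ∀ a, 0 < v a) (hv : ∑ a, v a = 1) {u : E} (hπu : ∀ a j, ⟪π a j, u⟫_𝕜 = 1)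
    (hπ : ∀ a, ∑ j, π a j = u) :
    ∑ a, v a * scatter (R a) ≤ ∑ a, v a * scatter (Q a) ∧
    (∑ a, v a * scatter (Q a) = ∑ a, v a * scatter (R a) ↔
      ∃ D : ι → E, ∑ a, (v a : 𝕜) • D a = 0 ∧ ∀ a j, Q a j = R a j + D a) := by
  have hD := hQ.sum_inner_smul_sub_eq_zero (isDualFrame_of_frameOp_eq hR hbij.1)
  obtain ⟨D, rfl⟩ : ∃ D, Q = R + D := ⟨Q - R, (add_sub_cancel R Q).symm⟩
  simp only [Pi.add_apply, add_sub_cancel_left] at hD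
  have hnonneg (a : ι) : 0 ≤ v a * scatter (D a) := mul_nonneg (hvpos a).le (scatter_nonneg 𝕜 _)
  simp only [Pi.add_apply, sum_mul_scatter_add_eq_of_frameOp_eq hπu hD hbij hR hv hπ,
    le_add_iff_nonneg_right, add_eq_left, add_right_inj,
    sum_eq_zero_iff_of_nonneg fun a _ => hnonneg a, mem_univ, true_implies, mul_eq_zero,
    (hvpos _).ne', false_or, scatter_eq_zero_iff 𝕜]
  refine ⟨sum_nonneg fun a _ => hnonneg a, fun h => ?_, fun ⟨c, _, hc⟩ a => ⟨c a, hc a⟩⟩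
  choose c hc using h
  refine ⟨c, ?_, hc⟩
  have := sum_smul_sum_eq_zero_of_sum_inner_smul_eq_zero hπu hD
  simp only [hc, sum_const, card_univ, smul_comm _ (Fintype.card κ), ← smul_sum] at this
  rw [← Nat.cast_smul_eq_nsmul 𝕜, smul_eq_zero] at this
  exact this.resolve_left (Nat.cast_ne_zero.mpr Fintype.card_ne_zero)

section Vectorization

variable {𝕜 m n : Type*} [RCLike 𝕜] [Fintype m] [Fintype n]

variable (𝕜) in
noncomputable def vecEuclidean : Matrix m n 𝕜 ≃ₗ[𝕜] EuclideanSpace 𝕜 (n × m) where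
  toFun A := WithLp.toLp 2 A.vec
  invFun x := Matrix.of fun i j => x (j, i)
  map_add' A B := by simp [vec_add]
  map_smul' c A := by simp [vec_smul]
  left_inv _ := rfl
  right_inv _ := rfl

theorem inner_vecEuclidean (A B : Matrix m n 𝕜) :
    ⟪vecEuclidean 𝕜 A, vecEuclidean 𝕜 B⟫_𝕜 = (Aᴴ * B).trace := by
  change ⟪WithLp.toLp 2 A.vec, WithLp.toLp 2 B.vec⟫_𝕜 = _
  rw [EuclideanSpace.inner_toLp_toLp, dotProduct_comm, star_vec_dotProduct_vec]

theorem LinearEquiv.exists_sum_smul_eq_zero_and_eq_add_iff {M N ι κ : Type*} [AddCommGroup M]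
    [Module 𝕜 M] [AddCommGroup N] [Module 𝕜 N] [Fintype ι] (V : M ≃ₗ[𝕜] N) (w : ι → 𝕜)
    (Q R : ι → κ → M) :
    (∃ D : ι → N, ∑ a, w a • D a = 0 ∧ ∀ a j, V (Q a j) = V (R a j) + D a) ↔
      ∃ D : ι → M, ∑ a, w a • D a = 0 ∧ ∀ a j, Q a j = R a j + D a := by
  constructor
  · rintro ⟨D, hD0, hD⟩
    refine ⟨fun a => V.symm (D a), V.injective ?_, fun a j => V.injective (by simp [hD])⟩
    simpa only [map_sum, map_smul, V.apply_symm_apply, map_zero] using hD0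
  · rintro ⟨D, hD0, hD⟩
    exact ⟨fun a => V (D a), by simpa only [map_sum, map_smul, map_zero] using congrArg V hD0,
      fun a j => by simp [hD]⟩

end Vectorization

section RankOneProj

variable {d : ℕ}

theorem frobSq_eq_norm_sq (A : Matrix (Fin d) (Fin d) ℂ) :
    frobSq A = ‖vecEuclidean ℂ A‖ ^ 2 := by
  rw [← inner_self_eq_norm_sq (𝕜 := ℂ), inner_vecEuclidean]
  rfl

theorem scatter_vecEuclidean {κ : Type*} [Fintype κ] (X : κ → Matrix (Fin d) (Fin d) ℂ) :
    scatter (fun j => vecEuclidean ℂ (X j)) =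
      ∑ j, frobSq (X j) - (Fintype.card κ : ℝ)⁻¹ * frobSq (∑ j, X j) := by
  simp only [scatter, frobSq_eq_norm_sq, map_sum]

theorem conjTranspose_rankOneProj (x : EuclideanSpace ℂ (Fin d)) :
    (rankOneProj x)ᴴ = rankOneProj x := by
  ext r s
  simp [rankOneProj, mul_comm]

theorem trace_rankOneProj_mul (x : EuclideanSpace ℂ (Fin d)) (M : Matrix (Fin d) (Fin d) ℂ) :
    (rankOneProj x * M).trace = ⟪vecEuclidean ℂ (rankOneProj x), vecEuclidean ℂ M⟫_ℂ := by
  rw [inner_vecEuclidean, conjTranspose_rankOneProj]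

theorem trace_rankOneProj (x : EuclideanSpace ℂ (Fin d)) :
    (rankOneProj x).trace = ⟪x, x⟫_ℂ := by
  simp only [rankOneProj, Matrix.trace, diag_apply, of_apply, PiLp.inner_apply, RCLike.inner_apply]

theorem sum_rankOneProj_eq_one {f : Fin d → EuclideanSpace ℂ (Fin d)} (hf : Orthonormal ℂ f) :
    ∑ j, rankOneProj (f j) = 1 := by
  set U : Matrix (Fin d) (Fin d) ℂ := Matrix.of fun r j => f j r
  have hU : Uᴴ * U = 1 := by
    ext i j
    simpa [U, mul_apply, one_apply, PiLp.inner_apply, mul_comm] using orthonormal_iff_ite.mp hf i j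
  ext r s
  simpa [U, mul_apply, Matrix.sum_apply, rankOneProj] using
    congrArg (fun M => M r s) (mul_eq_one_comm.mp hU)

end RankOneProj

/-- **Optimality of the canonical dual frame.** For an IC-POVM `{v_a π^a_j}` built from
orthonormal bases, any reconstruction OVD `Q` satisfies
`∑_a v_a (∑_j ‖Q^a_j‖² − (1/d)‖∑_j Q^a_j‖²) ≥ ∑_a v_a (∑_j ‖R^a_j‖² − (1/d)‖∑_j R^a_j‖²)`
where `R = 𝓕⁻¹ ∘ π` is the canonical dual, with equality iff `Q^a_j = R^a_j + D_a`
for some matrices `D_a` with `∑_a v_a D_a = 0`. -/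
theorem canonical_dual_frame_optimal (d m : ℕ) (hd : 0 < d)
    (e : Fin m → Fin d → EuclideanSpace ℂ (Fin d)) (he : ∀ a, Orthonormal ℂ (e a))
    (v : Fin m → ℝ) (hv : ∀ a, 0 < v a) (hvsum : ∑ a, v a = 1)
    (𝓕 : Matrix (Fin d) (Fin d) ℂ → Matrix (Fin d) (Fin d) ℂ)
    (h𝓕 : ∀ M, 𝓕 M = ∑ a : Fin m, ∑ j : Fin d,
      ((v a : ℂ) * (rankOneProj (e a j) * M).trace) • rankOneProj (e a j))
    (hbij : Function.Bijective 𝓕)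
    (R : Fin m → Fin d → Matrix (Fin d) (Fin d) ℂ)
    (hR : ∀ a j, 𝓕 (R a j) = rankOneProj (e a j))
    (Q : Fin m → Fin d → Matrix (Fin d) (Fin d) ℂ)
    (hQ : ∀ M : Matrix (Fin d) (Fin d) ℂ,
      ∑ a : Fin m, ∑ j : Fin d,
        ((v a : ℂ) * (rankOneProj (e a j) * M).trace) • Q a j = M) :
    (∑ a, v a * ((∑ j, frobSq (Q a j)) - (d : ℝ)⁻¹ * frobSq (∑ j, Q a j))
      ≥ ∑ a, v a * ((∑ j, frobSq (R a j)) - (d : ℝ)⁻¹ * frobSq (∑ j, R a j))) ∧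
    ((∑ a, v a * ((∑ j, frobSq (Q a j)) - (d : ℝ)⁻¹ * frobSq (∑ j, Q a j))
        = ∑ a, v a * ((∑ j, frobSq (R a j)) - (d : ℝ)⁻¹ * frobSq (∑ j, R a j))) ↔
      ∃ D : Fin m → Matrix (Fin d) (Fin d) ℂ,
        (∑ a, (v a : ℂ) • D a = 0) ∧ ∀ a j, Q a j = R a j + D a) := by
  have : Nonempty (Fin d) := ⟨⟨0, hd⟩⟩
  set V := vecEuclidean ℂ (m := Fin d) (n := Fin d)
  set π' : Fin m → Fin d → EuclideanSpace ℂ (Fin d × Fin d) := fun a j => V (rankOneProj (e a j))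
  have hV𝓕 (M : Matrix (Fin d) (Fin d) ℂ) : V (𝓕 M) = frameOp ℂ v π' (V M) := by
    simp [h𝓕, frameOp_apply, trace_rankOneProj_mul, π', V]
  have hbij' : Function.Bijective (frameOp ℂ v π') := by
    have : ⇑(frameOp ℂ v π') = V ∘ 𝓕 ∘ V.symm := funext fun x => by simp [hV𝓕]
    exact this ▸ V.bijective.comp (hbij.comp V.symm.bijective)
  have hQ' : IsDualFrame ℂ v π' fun a j => V (Q a j) := fun x => by
    simpa [trace_rankOneProj_mul, π', V] using congrArg V (hQ (V.symm x))
  have hπu (a : Fin m) (j : Fin d) : ⟪π' a j, V 1⟫_ℂ = 1 := by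
    rw [← trace_rankOneProj_mul, mul_one, trace_rankOneProj, inner_self_eq_norm_sq_to_K,
      (he a).1 j, ofReal_one, one_pow]
  have hπ (a : Fin m) : ∑ j, π' a j = V 1 := by
    simp only [π', ← map_sum, sum_rankOneProj_eq_one (he a)]
  have key := hQ'.canonicalDual_optimal hbij' (fun a j => by rw [← hV𝓕, hR]) hv hvsum hπu hπ
  simp only [V, scatter_vecEuclidean, Fintype.card_fin] at key
  exact ⟨key.1, key.2.trans (V.exists_sum_smul_eq_zero_and_eq_add_iff _ Q R)⟩
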